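/- Let α ≥ 0 and let b : ℝ × ℝ → ℝ be smooth with b(r,λ) > 0 everywhere; write primes for ∂/∂r, and set Q := 2/b − (b′)²/b² + (b′)⁴/(4b³) − (b′)²b″/(2b²) + (b″)²/(2b). Suppose b satisfies the RG-2 angular evolution equation ∂_λ b = −2(1 − b″/2) − (α/2)Q, and that the scalar curvature R := 2/b + (b′)²/(2b²) − 2b″/b is nonnegative at a point. Then at that point the area A := 4πb of the sphere satisfies ∂_λ A ≤ −16·π^{3/2}·M_H/√A, where M_H := (√b/2)·(1 − (b′)²/(4b)) is the Hawking mass of the sphere. -/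

import Mathlib

/-- The radial partial derivative `∂g/∂r` of a function `g(r,λ)` of two variables. -/
noncomputable def dr (g : ℝ → ℝ → ℝ) (r l : ℝ) : ℝ := deriv (fun s => g s l) r

/-- The quadratic curvature contraction
`Q = 2/b − b′²/b² + b′⁴/(4b³) − b′²b″/(2b²) + b″²/(2b)` of the `b`-form metric. -/
noncomputable def Qquad (b : ℝ → ℝ → ℝ) (r l : ℝ) : ℝ :=
  2 / b r l - (dr b r l) ^ 2 / (b r l) ^ 2 + (dr b r l) ^ 4 / (4 * (b r l) ^ 3)
    - (dr b r l) ^ 2 * dr (dr b) r l / (2 * (b r l) ^ 2)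
    + (dr (dr b) r l) ^ 2 / (2 * b r l)

/-- The quadratic curvature contraction is always nonnegative:
`4B³·Q = ½[(2Bq − p²)² + (4B − p²)²]`. -/
lemma Qquad_nonneg_aux (B p q : ℝ) (hB : 0 < B) :
    0 ≤ 2 / B - p ^ 2 / B ^ 2 + p ^ 4 / (4 * B ^ 3)
      - p ^ 2 * q / (2 * B ^ 2) + q ^ 2 / (2 * B) := by
  have hB0 : B ≠ 0 := ne_of_gt hB
  have key : 2 / B - p ^ 2 / B ^ 2 + p ^ 4 / (4 * B ^ 3)
      - p ^ 2 * q / (2 * B ^ 2) + q ^ 2 / (2 * B)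
      = ((2 * B * q - p ^ 2) ^ 2 + (4 * B - p ^ 2) ^ 2) / (8 * B ^ 3) := by
    field_simp
    ring
  rw [key]
  positivity

/-- Under the RG-2 angular evolution `∂_λ b = −2(1 − b″/2) − (α/2)Q`, at any point
where the scalar curvature `R = 2/b + b′²/(2b²) − 2b″/b` is nonnegative, the area
`A = 4πb` satisfies `∂_λ A ≤ −16π^{3/2}·M_H/√A`, where
`M_H = (√b/2)(1 − b′²/(4b))` is the Hawking mass of the sphere. -/
theorem rg2_area_hawking_mass_bound
    (α : ℝ) (hα : 0 ≤ α) (b : ℝ → ℝ → ℝ)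
    (hb : ContDiff ℝ (⊤ : ℕ∞) (Function.uncurry b))
    (hbpos : ∀ r l, 0 < b r l)
    (hflow : ∀ r l, deriv (fun t => b r t) l
      = -2 * (1 - dr (dr b) r l / 2) - (α / 2) * Qquad b r l)
    (r₀ l₀ : ℝ)
    (hR : 0 ≤ 2 / b r₀ l₀ + (dr b r₀ l₀) ^ 2 / (2 * (b r₀ l₀) ^ 2)
      - 2 * dr (dr b) r₀ l₀ / b r₀ l₀) :
    deriv (fun t => 4 * Real.pi * b r₀ t) l₀
      ≤ -(16 * Real.pi ^ ((3 : ℝ) / 2)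
          * (Real.sqrt (b r₀ l₀) / 2 * (1 - (dr b r₀ l₀) ^ 2 / (4 * b r₀ l₀)))
          / Real.sqrt (4 * Real.pi * b r₀ l₀)) := by
  have hBpos : 0 < b r₀ l₀ := hbpos r₀ l₀
  have hB0 : b r₀ l₀ ≠ 0 := ne_of_gt hBpos
  have hπ : 0 < Real.pi := Real.pi_pos
  set B := b r₀ l₀ with hBdef
  set p := dr b r₀ l₀ with hpdef
  set q := dr (dr b) r₀ l₀ with hqdef
  -- differentiability of t ↦ b r₀ t
  have hdiff : DifferentiableAt ℝ (fun t => b r₀ t) l₀ := by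
    have h1 : Differentiable ℝ (fun t : ℝ => Function.uncurry b (r₀, t)) :=
      (hb.differentiable (by simp)).comp ((differentiable_const r₀).prodMk differentiable_id)
    exact h1.differentiableAt
  -- compute the left-hand side
  have hL : deriv (fun t => 4 * Real.pi * b r₀ t) l₀
      = 4 * Real.pi * (-2 * (1 - q / 2) - (α / 2) * Qquad b r₀ l₀) := by
    rw [deriv_const_mul (4 * Real.pi) hdiff, hflow r₀ l₀]
  -- simplify the right-hand side
  have hsπ : 0 < Real.sqrt Real.pi := Real.sqrt_pos.2 hπ
  have hsB : 0 < Real.sqrt B := Real.sqrt_pos.2 hBpos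
  have hpow : Real.pi ^ ((3 : ℝ) / 2) = Real.pi * Real.sqrt Real.pi := by
    rw [show (3 : ℝ) / 2 = 1 + 1 / 2 by norm_num, Real.rpow_add hπ, Real.rpow_one,
      Real.sqrt_eq_rpow]
  have hsqrt4 : Real.sqrt 4 = 2 := by
    rw [show (4 : ℝ) = 2 ^ 2 by norm_num, Real.sqrt_sq (by norm_num : (0:ℝ) ≤ 2)]
  have hsq : Real.sqrt (4 * Real.pi * B)
      = 2 * Real.sqrt Real.pi * Real.sqrt B := by
    rw [Real.sqrt_mul (by positivity) B, Real.sqrt_mul (by norm_num) Real.pi, hsqrt4]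
  have hRHS : -(16 * Real.pi ^ ((3 : ℝ) / 2)
        * (Real.sqrt B / 2 * (1 - p ^ 2 / (4 * B)))
        / Real.sqrt (4 * Real.pi * B))
      = -(4 * Real.pi * (1 - p ^ 2 / (4 * B))) := by
    rw [hpow, hsq]
    field_simp
    ring
  rw [hL, hRHS]
  -- key consequences of the hypotheses
  have hQ : 0 ≤ Qquad b r₀ l₀ := by
    have := Qquad_nonneg_aux B p q hBpos
    rw [Qquad]
    convert this using 2
  have hq' : q * B ≤ B + p ^ 2 / 4 := by
    have h2 : 0 ≤ (2 / B + p ^ 2 / (2 * B ^ 2) - 2 * q / B) * (B ^ 2 / 2) :=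
      mul_nonneg hR (by positivity)
    have h3 : (2 / B + p ^ 2 / (2 * B ^ 2) - 2 * q / B) * (B ^ 2 / 2)
        = B + p ^ 2 / 4 - q * B := by
      field_simp
      ring
    linarith [h3 ▸ h2]
  -- finish
  rw [← sub_nonneg]
  have t1 : 0 ≤ 4 * Real.pi / B * (B + p ^ 2 / 4 - q * B) :=
    mul_nonneg (by positivity) (by linarith)
  have t2 : 0 ≤ 2 * Real.pi * α * Qquad b r₀ l₀ := by
    have := mul_nonneg (mul_nonneg (by positivity : (0:ℝ) ≤ 2 * Real.pi) hα) hQ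
    linarith [this]
  have hsum : -(4 * Real.pi * (1 - p ^ 2 / (4 * B)))
      - 4 * Real.pi * (-2 * (1 - q / 2) - (α / 2) * Qquad b r₀ l₀)
      = 4 * Real.pi / B * (B + p ^ 2 / 4 - q * B) + 2 * Real.pi * α * Qquad b r₀ l₀ := by
    field_simp
    ring
  rw [hsum]
  linarith
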